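/- Let G₁, …, G_d be matrix blocks with G_μ of dimension r_{μ-1} × r_μ and length n_μ, r₀ = r_d = 1, and let h ∈ {1,…,d}. Suppose G_μ is left orthogonal (⟨G_μᵀ, G_μ⟩ = I) for all μ < h and right orthogonal (⟨G_μ, G_μᵀ⟩ = I) for all μ > h. Then the TT tensor A^G represented by G, with entries A^G_{i₁,…,i_d} = G₁(i₁)⋯G_d(i_d) (a 1×1 matrix identified with a real number), satisfies ‖A^G‖_F = ‖G_h‖, where ‖A^G‖_F² = ∑_{i₁,…,i_d} (A^G_{i₁,…,i_d})² and ‖G_h‖² = ∑_j ‖G_h(j)‖_F². -/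

import Mathlib

/-! The Gram matrices `Σ_i P_s(i)ᵀ P_s(i)` of the partial products `P_s = G₁⋯G_s` obey the
recursion `X ↦ Σ_j G_s(j)ᵀ X G_s(j)`. Left orthogonality keeps them equal to the identity up to
`s = h`, so the next one is `⟨G_hᵀ, G_h⟩`, whose trace is `‖G_h‖²`. Right orthogonality and the
cyclicity of the trace keep the trace unchanged from there up to `s = d`, where, as
`r₀ = r_d = 1`, it is `‖A^G‖_F²`. -/

open Matrix

/-- The (ordered) Kronecker product `G₁ ⊗ … ⊗ G_s` of the first `s` matrix blocks of a
family of matrix blocks `G`, where `G μ` has dimension `r μ × r (μ+1)` and length `n μ`.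
It is a matrix block of dimension `r 0 × r s`, indexed by tuples `(i₁,…,i_s)`;
the empty product is the (length-one) identity block. -/
def blockProd {r n : ℕ → ℕ}
    (G : ∀ μ : ℕ, Fin (n μ) → Matrix (Fin (r μ)) (Fin (r (μ + 1))) ℝ) :
    (s : ℕ) → ((μ : Fin s) → Fin (n μ.val)) → Matrix (Fin (r 0)) (Fin (r s)) ℝ
  | 0, _ => 1
  | s + 1, i =>
      blockProd G s (fun μ => i ⟨μ.val, Nat.lt_succ_of_lt μ.isLt⟩) *
        G s (i ⟨s, Nat.lt_succ_self s⟩)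

theorem Matrix.trace_transpose_mul_self {m k : Type*} [Fintype m] [Fintype k]
    (A : Matrix m k ℝ) : trace (Aᵀ * A) = ∑ a, ∑ b, A a b ^ 2 := by
  simp only [trace, diag, mul_apply, transpose_apply, sq]
  exact Finset.sum_comm

theorem Matrix.trace_sum_transpose_mul_mul_eq_trace {ι m k : Type*} [Fintype ι] [Fintype m]
    [Fintype k] [DecidableEq m] (H : ι → Matrix m k ℝ) (P : Matrix m m ℝ)
    (hH : ∑ j, H j * (H j)ᵀ = 1) : trace (∑ j, (H j)ᵀ * P * H j) = trace P := by
  calc trace (∑ j, (H j)ᵀ * P * H j) = ∑ j, trace (P * (H j * (H j)ᵀ)) := by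
        rw [trace_sum]
        refine Finset.sum_congr rfl fun j _ => ?_
        rw [Matrix.mul_assoc, trace_mul_comm, Matrix.mul_assoc]
    _ = trace P := by rw [← trace_sum, ← Matrix.mul_sum, hH, Matrix.mul_one]

section blockGram

variable {r n : ℕ → ℕ} (G : ∀ μ : ℕ, Fin (n μ) → Matrix (Fin (r μ)) (Fin (r (μ + 1))) ℝ)

def blockGram (s : ℕ) : Matrix (Fin (r s)) (Fin (r s)) ℝ :=
  ∑ i : (μ : Fin s) → Fin (n μ.val), (blockProd G s i)ᵀ * blockProd G s i

theorem blockProd_snoc (s : ℕ) (i : (μ : Fin s) → Fin (n μ.val)) (j : Fin (n s)) :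
    blockProd G (s + 1) (Fin.snoc (α := fun μ : Fin (s + 1) => Fin (n μ.val)) i j)
      = blockProd G s i * G s j := by
  simp only [blockProd]
  congr 2
  · funext μ
    exact Fin.snoc_castSucc (α := fun μ : Fin (s + 1) => Fin (n μ.val)) ..
  · exact Fin.snoc_last (α := fun μ : Fin (s + 1) => Fin (n μ.val)) ..

theorem blockGram_succ (s : ℕ) :
    blockGram G (s + 1) = ∑ j, (G s j)ᵀ * blockGram G s * G s j := by
  rw [blockGram, ← (Fin.snocEquiv fun μ : Fin (s + 1) => Fin (n μ.val)).sum_comp,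
    Fintype.sum_prod_type]
  refine Finset.sum_congr rfl fun j _ => ?_
  rw [blockGram, Matrix.mul_sum, Matrix.sum_mul]
  refine Finset.sum_congr rfl fun i _ => ?_
  simp only [Fin.snocEquiv, Equiv.coe_fn_mk, blockProd_snoc, transpose_mul, Matrix.mul_assoc]

theorem blockGram_eq_one (s : ℕ) (hleft : ∀ μ < s, ∑ j, (G μ j)ᵀ * G μ j = 1) :
    blockGram G s = 1 := by
  induction s with
  | zero => simp [blockGram, blockProd]
  | succ s ih =>
    rw [blockGram_succ, ih fun μ hμ => hleft μ (by omega)]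
    simpa only [Matrix.mul_one] using hleft s (by omega)

theorem trace_blockGram_eq_of_le (h s : ℕ) (hs : h ≤ s)
    (hright : ∀ μ, h ≤ μ → μ < s → ∑ j, G μ j * (G μ j)ᵀ = 1) :
    trace (blockGram G s) = trace (blockGram G h) := by
  induction s, hs using Nat.le_induction with
  | base => rfl
  | succ s hs ih =>
    rw [blockGram_succ, trace_sum_transpose_mul_mul_eq_trace _ _ (hright s hs (by omega)),
      ih fun μ h₁ h₂ => hright μ h₁ (by omega)]

end blockGram

/-- **Frobenius norm of an `h`-orthogonal TT tensor.**
Let `G μ` (for `μ < d`) be matrix blocks with `G μ` of dimension `r μ × r (μ+1)` and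
length `n μ`, where `r 0 = r d = 1`.  Suppose the representation is `h`-orthogonal:
`G μ` is left orthogonal for `μ < h` and right orthogonal for `h < μ < d`.
Then the TT tensor `A^G` with entries `A^G_{i₁,…,i_d} = G₁(i₁)⋯G_d(i_d)` (a `1 × 1`
matrix identified with a real number) satisfies `‖A^G‖_F = ‖G_h‖`, i.e.
`√(∑_i (A^G_i)²) = √(∑_j ‖G_h(j)‖_F²)`. -/
theorem frobeniusNorm_TT_eq_norm_core
    (d : ℕ) (r n : ℕ → ℕ) (hr0 : r 0 = 1) (hrd : r d = 1)
    (G : ∀ μ : ℕ, Fin (n μ) → Matrix (Fin (r μ)) (Fin (r (μ + 1))) ℝ)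
    (h : ℕ) (hh : h < d)
    (hleft : ∀ μ : ℕ, μ < h → ∑ j : Fin (n μ), (G μ j)ᵀ * G μ j = 1)
    (hright : ∀ μ : ℕ, h < μ → μ < d → ∑ j : Fin (n μ), G μ j * (G μ j)ᵀ = 1) :
    Real.sqrt (∑ i : ((μ : Fin d) → Fin (n μ.val)),
        (blockProd G d i ⟨0, by omega⟩ ⟨0, by omega⟩) ^ 2)
      = Real.sqrt (∑ j : Fin (n h), ∑ a : Fin (r h), ∑ b : Fin (r (h + 1)),
          (G h j a b) ^ 2) := by
  have : Subsingleton (Fin (r 0)) := by rw [hr0]; infer_instance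
  have : Subsingleton (Fin (r d)) := by rw [hrd]; infer_instance
  congr 1
  calc ∑ i, (blockProd G d i ⟨0, by omega⟩ ⟨0, by omega⟩) ^ 2
      = trace (blockGram G d) := by
        simp only [blockGram, trace_sum, trace_transpose_mul_self,
          Fintype.sum_subsingleton _ (⟨0, by omega⟩ : Fin (r 0)),
          Fintype.sum_subsingleton _ (⟨0, by omega⟩ : Fin (r d))]
    _ = trace (blockGram G (h + 1)) :=
        trace_blockGram_eq_of_le G (h + 1) d hh hright
    _ = ∑ j, ∑ a, ∑ b, G h j a b ^ 2 := by
        simp only [blockGram_succ, blockGram_eq_one G h hleft, Matrix.mul_one, trace_sum,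
          trace_transpose_mul_self]
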